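/- arXiv:2012.15381 — 3 statements merged into one kernel-verified Lean document; each statement's English description precedes it below -/
import Mathlib

section
/- Let P be a finite set of points in the Euclidean plane, p ∈ sky(P) and λ ≥ 0. Let c = nrp(p,λ) and r = nrp(c,λ). Then: (i) every q ∈ sky(P) with x(p) ≤ x(q) ≤ x(r) satisfies d(c,q) ≤ λ; and (ii) for every c' ∈ sky(P) and every r' ∈ sky(P) with x(r') > x(r), there exists q ∈ sky(P) with x(p) ≤ x(q) ≤ x(r') and d(c',q) > λ. In other words, r is the rightmost point of sky(P) such that the portion of sky(P) from p to r can be covered by a single disk of radius λ centered at a point of sky(P). -/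
abbrev Pt : Type := EuclideanSpace ℝ (Fin 2)

open Classical in
noncomputable def sky (P : Finset Pt) : Finset Pt :=
  P.filter (fun p => ∀ q ∈ P, q ≠ p → q 0 < p 0 ∨ q 1 < p 1)

lemma sky_anti {P : Finset Pt} {a b : Pt} (ha : a ∈ sky P) (hb : b ∈ sky P)
    (h : a 0 ≤ b 0) : b 1 ≤ a 1 := by
  classical
  simp only [sky, Finset.mem_filter] at ha hb
  by_cases hab : b = a
  · simp [hab]
  · rcases ha.2 b hb.1 hab with h' | h'
    · linarith
    · linarith

lemma dist_le_dist2 (a b u v : Pt) (h0 : |a 0 - b 0| ≤ |u 0 - v 0|)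
    (h1 : |a 1 - b 1| ≤ |u 1 - v 1|) : dist a b ≤ dist u v := by
  rw [EuclideanSpace.dist_eq, EuclideanSpace.dist_eq]
  apply Real.sqrt_le_sqrt
  rw [Fin.sum_univ_two, Fin.sum_univ_two]
  simp only [Real.dist_eq]
  have e0 : |a 0 - b 0| ^ 2 ≤ |u 0 - v 0| ^ 2 :=
    pow_le_pow_left₀ (abs_nonneg _) h0 2
  have e1 : |a 1 - b 1| ^ 2 ≤ |u 1 - v 1| ^ 2 :=
    pow_le_pow_left₀ (abs_nonneg _) h1 2
  linarith

theorem stmt9 (P : Finset Pt) (p : Pt) (hp : p ∈ sky P)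
    (lam : ℝ) (hlam : 0 ≤ lam)
    (c : Pt) (hc : c ∈ sky P ∧ p 0 ≤ c 0 ∧ dist p c ≤ lam)
    (hcmax : ∀ q ∈ sky P, p 0 ≤ q 0 → dist p q ≤ lam → q 0 ≤ c 0)
    (r : Pt) (hr : r ∈ sky P ∧ c 0 ≤ r 0 ∧ dist c r ≤ lam)
    (hrmax : ∀ q ∈ sky P, c 0 ≤ q 0 → dist c q ≤ lam → q 0 ≤ r 0) :
    (∀ q ∈ sky P, p 0 ≤ q 0 → q 0 ≤ r 0 → dist c q ≤ lam) ∧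
    (∀ c' ∈ sky P, ∀ r' ∈ sky P, r 0 < r' 0 →
      ∃ q ∈ sky P, p 0 ≤ q 0 ∧ q 0 ≤ r' 0 ∧ lam < dist c' q) := by
  obtain ⟨hcS, hpc0, hpcd⟩ := hc
  obtain ⟨hrS, hcr0, hcrd⟩ := hr
  have hpc1 : c 1 ≤ p 1 := sky_anti hp hcS hpc0
  have hcr1 : r 1 ≤ c 1 := sky_anti hcS hrS hcr0
  constructor
  · intro q hq hpq hqr
    by_cases hqc : q 0 ≤ c 0
    · have h1 : c 1 ≤ q 1 := sky_anti hq hcS hqc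
      have h2 : q 1 ≤ p 1 := sky_anti hp hq hpq
      refine le_trans (dist_le_dist2 c q p c ?_ ?_) hpcd
      · rw [abs_of_nonneg (by linarith), abs_of_nonpos (by linarith)]; linarith
      · rw [abs_of_nonpos (by linarith), abs_of_nonneg (by linarith)]; linarith
    · push_neg at hqc
      have h1 : q 1 ≤ c 1 := sky_anti hcS hq (le_of_lt hqc)
      have h2 : r 1 ≤ q 1 := sky_anti hq hrS hqr
      refine le_trans (dist_le_dist2 c q c r ?_ ?_) hcrd
      · rw [abs_of_nonpos (by linarith), abs_of_nonpos (by linarith)]; linarith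
      · rw [abs_of_nonneg (by linarith), abs_of_nonneg (by linarith)]; linarith
  · intro c' hc' r' hr' hrr'
    have hpr' : p 0 ≤ r' 0 := by linarith
    by_cases h1 : lam < dist c' p
    · exact ⟨p, hp, le_refl _, hpr', h1⟩
    by_cases h2 : lam < dist c' r'
    · exact ⟨r', hr', hpr', le_refl _, h2⟩
    push_neg at h1 h2
    exfalso
    have hr'1c : r' 1 ≤ c 1 := sky_anti hcS hr' (by linarith)
    by_cases hcp : p 0 ≤ c' 0
    · have hc'c : c' 0 ≤ c 0 := hcmax c' hc' hcp (by rwa [dist_comm])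
      have hc1 : c 1 ≤ c' 1 := sky_anti hc' hcS hc'c
      have hd : dist c r' ≤ lam := by
        refine le_trans (dist_le_dist2 c r' c' r' ?_ ?_) h2
        · rw [abs_of_nonpos (by linarith), abs_of_nonpos (by linarith)]; linarith
        · rw [abs_of_nonneg (by linarith), abs_of_nonneg (by linarith)]; linarith
      have := hrmax r' hr' (by linarith) hd
      linarith
    · push_neg at hcp
      have hp1 : p 1 ≤ c' 1 := sky_anti hc' hp (le_of_lt hcp)
      have hr'p : r' 1 ≤ p 1 := sky_anti hp hr' hpr'
      have hd : dist p r' ≤ lam := by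
        refine le_trans (dist_le_dist2 p r' c' r' ?_ ?_) h2
        · rw [abs_of_nonpos (by linarith), abs_of_nonpos (by linarith)]; linarith
        · rw [abs_of_nonneg (by linarith), abs_of_nonneg (by linarith)]; linarith
      have := hcmax r' hr' hpr' hd
      linarith
end

section
/- Let P be a finite set of points in the Euclidean plane and let p₀, q₀ ∈ sky(P) with x(p₀) < x(q₀). Let p, p' ∈ sky(P) with x(p₀) ≤ x(p) < x(p') ≤ x(q₀), and suppose both are weakly on the p₀-side of the bisector of p₀ and q₀, i.e., d(p,p₀) ≤ d(p,q₀) and d(p',p₀) ≤ d(p',q₀). Then max{ d(p,p₀), d(p,q₀) } > max{ d(p',p₀), d(p',q₀) } and min{ d(p,p₀), d(p,q₀) } < min{ d(p',p₀), d(p',q₀) }. -/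
open Classical

lemma dist_eq2 (a b : Pt) : dist a b = Real.sqrt ((a 0 - b 0)^2 + (a 1 - b 1)^2) := by
  rw [EuclideanSpace.dist_eq]
  simp [Fin.sum_univ_two, Real.dist_eq, sq_abs]

lemma sky_mono {P : Finset Pt} {a b : Pt} (ha : a ∈ sky P) (hb : b ∈ sky P)
    (hab : a 0 ≤ b 0) : b 1 ≤ a 1 := by
  by_cases h : b = a
  · rw [h]
  · have ha' := (Finset.mem_filter.mp ha).2
    have hbP := (Finset.mem_filter.mp hb).1
    rcases ha' b hbP h with h' | h'
    · linarith
    · linarith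

theorem stmt14 (P : Finset Pt) (p₀ q₀ p p' : Pt)
    (hp₀ : p₀ ∈ sky P) (hq₀ : q₀ ∈ sky P) (hx : p₀ 0 < q₀ 0)
    (hp : p ∈ sky P) (hp' : p' ∈ sky P)
    (h1 : p₀ 0 ≤ p 0) (h2 : p 0 < p' 0) (h3 : p' 0 ≤ q₀ 0)
    (hside : dist p p₀ ≤ dist p q₀) (hside' : dist p' p₀ ≤ dist p' q₀) :
    max (dist p' p₀) (dist p' q₀) < max (dist p p₀) (dist p q₀) ∧
    min (dist p p₀) (dist p q₀) < min (dist p' p₀) (dist p' q₀) := by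
  have hne : p ≠ p' := fun h => by rw [h] at h2; exact lt_irrefl _ h2
  have hy1 : p 1 ≤ p₀ 1 := sky_mono hp₀ hp h1
  have hy2 : p' 1 < p 1 := by
    have := sky_mono hp hp' (le_of_lt h2)
    rcases lt_or_eq_of_le this with h | h
    · exact h
    · exfalso
      have ha' := (Finset.mem_filter.mp hp).2
      have hbP := (Finset.mem_filter.mp hp').1
      rcases ha' p' hbP (fun hh => hne hh.symm) with h' | h' <;> linarith
  have hy3 : q₀ 1 ≤ p' 1 := sky_mono hp' hq₀ h3
  have key1 : dist p' q₀ < dist p q₀ := by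
    rw [dist_eq2, dist_eq2]
    apply Real.sqrt_lt_sqrt (by positivity)
    nlinarith [sq_nonneg (p' 0 - q₀ 0), sq_nonneg (p' 1 - q₀ 1)]
  have key2 : dist p p₀ < dist p' p₀ := by
    rw [dist_eq2, dist_eq2]
    apply Real.sqrt_lt_sqrt (by positivity)
    nlinarith [sq_nonneg (p 0 - p₀ 0), sq_nonneg (p 1 - p₀ 1)]
  constructor
  · rw [max_eq_right hside, max_eq_right hside']
    exact key1
  · rw [min_eq_left hside, min_eq_left hside']
    exact key2
end

section
/- Let P be a finite set of points in the Euclidean plane, let p₀, q₀ ∈ sky(P) with x(p₀) < x(q₀), and assume every point p ∈ P satisfies x(p₀) ≤ x(p) ≤ x(q₀). Let L = { p ∈ P : d(p,p₀) ≤ d(p,q₀) } (nonempty, since p₀ ∈ L) and R = { p ∈ P : d(p,q₀) < d(p,p₀) } (nonempty, since q₀ ∈ R). Let p₁ be the point of L with largest x-coordinate, ties broken in favor of larger y-coordinate, and let q₁ be the point of R with largest y-coordinate, ties broken in favor of larger x-coordinate. Then p₁ ∈ sky(P) or q₁ ∈ sky(P). -/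
/-! If neither point were on the skyline, a point of `P` dominating `p₁` would have to lie on
`q₀`'s side of the bisector and a point dominating `q₁` on `p₀`'s side, so `q₁` lies weakly
up-left of `p₁`. But `p₁` and `q₁` are separated by the bisector of `p₀q₀`, whose normal
`q₀ - p₀` points down-right because `p₀` is on the skyline: so `q₁ - p₁` has positive inner
product with `q₀ - p₀`, which no up-left vector has. -/

open scoped RealInnerProductSpace

lemma inner_sub_pos_of_dist_le_of_dist_lt {E : Type*} [NormedAddCommGroup E]
    [InnerProductSpace ℝ E] {a b p q : E} (hp : dist p a ≤ dist p b) (hq : dist q b < dist q a) :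
    0 < ⟪q - p, b - a⟫ := by
  rw [dist_eq_norm, dist_eq_norm] at hp hq
  have hp2 := pow_le_pow_left₀ (norm_nonneg _) hp 2
  have hq2 := pow_lt_pow_left₀ hq (norm_nonneg _) two_ne_zero
  simp only [norm_sub_sq_real, inner_sub_left, inner_sub_right] at hp2 hq2 ⊢
  linarith

lemma inner_nonpos_of_opposite_quadrants {u v : EuclideanSpace ℝ (Fin 2)}
    (hu₀ : u 0 ≤ 0) (hu₁ : 0 ≤ u 1) (hv₀ : 0 ≤ v 0) (hv₁ : v 1 ≤ 0) : ⟪u, v⟫ ≤ 0 := by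
  simp only [PiLp.inner_apply, Fin.sum_univ_two, RCLike.inner_apply, conj_trivial]
  nlinarith [mul_nonneg (neg_nonneg.mpr hu₀) hv₀, mul_nonneg hu₁ (neg_nonneg.mpr hv₁)]

lemma eq_of_le_of_lex_le {p r : Pt} {i j : Fin 2} (hij : i ≠ j) (hi : p i ≤ r i)
    (hj : p j ≤ r j) (hlex : r i < p i ∨ (r i = p i ∧ r j ≤ p j)) : r = p := by
  obtain ⟨hri, hrj⟩ : r i = p i ∧ r j = p j := by
    rcases hlex with h | ⟨h, h'⟩ <;> constructor <;> linarith
  ext k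
  fin_cases i <;> fin_cases j <;> fin_cases k <;> simp_all

lemma mem_sky {P : Finset Pt} {p : Pt} :
    p ∈ sky P ↔ p ∈ P ∧ ∀ q ∈ P, q ≠ p → q 0 < p 0 ∨ q 1 < p 1 := by
  simp [sky]

lemma exists_dominating_of_not_mem_sky {P : Finset Pt} {p : Pt} (hp : p ∈ P)
    (hsky : p ∉ sky P) : ∃ r ∈ P, r ≠ p ∧ p 0 ≤ r 0 ∧ p 1 ≤ r 1 := by
  simpa [mem_sky, hp] using hsky

lemma lt_one_of_mem_sky_of_zero_lt {P : Finset Pt} {p q : Pt} (hp : p ∈ sky P) (hq : q ∈ P)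
    (hpq : p 0 < q 0) : q 1 < p 1 :=
  ((mem_sky.mp hp).2 q hq (by rintro rfl; exact hpq.false)).resolve_left hpq.not_gt

theorem stmt16_general (P : Finset Pt) (p₀ q₀ : Pt)
    (hp₀ : p₀ ∈ sky P) (hq₀ : q₀ ∈ sky P) (hx : p₀ 0 < q₀ 0)
    (p₁ : Pt) (hp₁ : p₁ ∈ P ∧ dist p₁ p₀ ≤ dist p₁ q₀)
    (hp₁max : ∀ p ∈ P, dist p p₀ ≤ dist p q₀ →
      p 0 < p₁ 0 ∨ (p 0 = p₁ 0 ∧ p 1 ≤ p₁ 1))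
    (q₁ : Pt) (hq₁ : q₁ ∈ P ∧ dist q₁ q₀ < dist q₁ p₀)
    (hq₁max : ∀ p ∈ P, dist p q₀ < dist p p₀ →
      p 1 < q₁ 1 ∨ (p 1 = q₁ 1 ∧ p 0 ≤ q₁ 0)) :
    p₁ ∈ sky P ∨ q₁ ∈ sky P := by
  by_contra! hnot
  obtain ⟨r, hrP, hrp, hr₀, hr₁⟩ := exists_dominating_of_not_mem_sky hp₁.1 hnot.1
  obtain ⟨s, hsP, hsq, hs₀, hs₁⟩ := exists_dominating_of_not_mem_sky hq₁.1 hnot.2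
  have hrR : dist r q₀ < dist r p₀ := by
    by_contra! hrL
    exact hrp (eq_of_le_of_lex_le zero_ne_one hr₀ hr₁ (hp₁max r hrP hrL))
  have hsL : dist s p₀ ≤ dist s q₀ := by
    by_contra! hsR
    exact hsq (eq_of_le_of_lex_le one_ne_zero hs₁ hs₀ (hq₁max s hsP hsR))
  have hy : p₁ 1 ≤ q₁ 1 := hr₁.trans <| (hq₁max r hrP hrR).elim le_of_lt fun h ↦ h.1.le
  have hx' : q₁ 0 ≤ p₁ 0 := hs₀.trans <| (hp₁max s hsP hsL).elim le_of_lt fun h ↦ h.1.le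
  have hq₀y : q₀ 1 < p₀ 1 := lt_one_of_mem_sky_of_zero_lt hp₀ (mem_sky.mp hq₀).1 hx
  refine (inner_sub_pos_of_dist_le_of_dist_lt hp₁.2 hq₁.2).not_ge ?_
  apply inner_nonpos_of_opposite_quadrants <;> simp only [PiLp.sub_apply] <;> linarith

theorem stmt16 (P : Finset Pt) (p₀ q₀ : Pt)
    (hp₀ : p₀ ∈ sky P) (hq₀ : q₀ ∈ sky P) (hx : p₀ 0 < q₀ 0)
    (hrange : ∀ p ∈ P, p₀ 0 ≤ p 0 ∧ p 0 ≤ q₀ 0)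
    (p₁ : Pt) (hp₁ : p₁ ∈ P ∧ dist p₁ p₀ ≤ dist p₁ q₀)
    (hp₁max : ∀ p ∈ P, dist p p₀ ≤ dist p q₀ →
      p 0 < p₁ 0 ∨ (p 0 = p₁ 0 ∧ p 1 ≤ p₁ 1))
    (q₁ : Pt) (hq₁ : q₁ ∈ P ∧ dist q₁ q₀ < dist q₁ p₀)
    (hq₁max : ∀ p ∈ P, dist p q₀ < dist p p₀ →
      p 1 < q₁ 1 ∨ (p 1 = q₁ 1 ∧ p 0 ≤ q₁ 0)) :
    p₁ ∈ sky P ∨ q₁ ∈ sky P :=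
  stmt16_general P p₀ q₀ hp₀ hq₀ hx p₁ hp₁ hp₁max q₁ hq₁ hq₁max
end
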